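/- Let G be a finite group with r(G) ≤ n. Then: (1) the exponent of H(n,G) equals the exponent of G; (2) H(n,G) is abelian if and only if G is abelian; (3) H(n,G) is nilpotent if and only if G is nilpotent; (4) H(n,G) is solvable if and only if G is solvable. -/

import Mathlib

/-- `(x₁,…,xₙ)` is a generating sequence of `G`: the entries generate `G`. -/
def IsGenSeq {G : Type*} [Group G] {n : ℕ} (x : Fin n → G) : Prop :=
  Subgroup.closure (Set.range x) = ⊤

/-- `r(G)`: the least `n` such that `G` has a generating sequence of length `n`. -/
noncomputable def grank (G : Type*) [Group G] : ℕ :=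
  sInf {n : ℕ | ∃ x : Fin n → G, IsGenSeq x}

/-- `G` is homogeneous of rank `n`: `Γ_n(G)` is nonempty and `Aut(G)` acts
transitively on it. -/
def IsHomogeneous (G : Type*) [Group G] (n : ℕ) : Prop :=
  (∃ x : Fin n → G, IsGenSeq x) ∧
    ∀ x y : Fin n → G, IsGenSeq x → IsGenSeq y → ∃ f : G ≃* G, ∀ i, f (x i) = y i

/-- The intersection of the kernels of all surjective homomorphisms `F_n → G`. -/
def coverKer (n : ℕ) (G : Type*) [Group G] : Subgroup (FreeGroup (Fin n)) :=
  ⨅ f ∈ {f : FreeGroup (Fin n) →* G | Function.Surjective f}, MonoidHom.ker f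

instance coverKer_normal (n : ℕ) (G : Type*) [Group G] : (coverKer n G).Normal := by
  constructor
  intro x hx g
  simp only [coverKer, Subgroup.mem_iInf] at hx ⊢
  intro f hf
  exact (MonoidHom.normal_ker f).conj_mem x (hx f hf) g

/-- The homogeneous cover `H(n,G) = F_n / K`, where `K` is the intersection of the
kernels of all surjective homomorphisms `F_n → G`. -/
abbrev HomogeneousCover (n : ℕ) (G : Type*) [Group G] :=
  FreeGroup (Fin n) ⧸ coverKer n G

lemma coverKer_le_ker {n : ℕ} {G : Type*} [Group G] (f : FreeGroup (Fin n) →* G)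
    (hf : Function.Surjective f) : coverKer n G ≤ f.ker := by
  intro w hw
  simp only [coverKer, Subgroup.mem_iInf] at hw
  exact hw f hf

/-- The induced map `H(n,G) →* G` from a surjective `f : F_n →* G`. -/
def coverMap {n : ℕ} {G : Type*} [Group G] (f : FreeGroup (Fin n) →* G)
    (hf : Function.Surjective f) : HomogeneousCover n G →* G :=
  QuotientGroup.lift _ f (coverKer_le_ker f hf)

lemma coverMap_surjective {n : ℕ} {G : Type*} [Group G] (f : FreeGroup (Fin n) →* G)
    (hf : Function.Surjective f) : Function.Surjective (coverMap f hf) := by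
  intro g
  obtain ⟨w, rfl⟩ := hf g
  exact ⟨QuotientGroup.mk w, rfl⟩

lemma eq_one_of_forall_coverMap {n : ℕ} {G : Type*} [Group G] (h : HomogeneousCover n G)
    (H : ∀ (f : FreeGroup (Fin n) →* G) (hf : Function.Surjective f), coverMap f hf h = 1) :
    h = 1 := by
  obtain ⟨w, rfl⟩ := QuotientGroup.mk_surjective h
  rw [QuotientGroup.eq_one_iff]
  simp only [coverKer, Subgroup.mem_iInf]
  intro f hf
  exact H f hf

lemma exists_surj_freeGroup (G : Type*) [Group G] [Finite G] (n : ℕ) (hr : grank G ≤ n) :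
    ∃ f : FreeGroup (Fin n) →* G, Function.Surjective f := by
  have hne : {m : ℕ | ∃ x : Fin m → G, IsGenSeq x}.Nonempty := by
    obtain ⟨m, ⟨e⟩⟩ := Finite.exists_equiv_fin G
    refine ⟨m, e.symm, ?_⟩
    unfold IsGenSeq
    rw [Set.range_eq_univ.mpr e.symm.surjective, Subgroup.closure_univ]
  obtain ⟨x, hx⟩ := Nat.sInf_mem hne
  set y : Fin n → G := fun i => if h : (i : ℕ) < grank G then x ⟨i, h⟩ else 1 with hy
  refine ⟨FreeGroup.lift y, ?_⟩
  rw [← MonoidHom.range_eq_top, FreeGroup.range_lift_eq_closure, eq_top_iff, ← hx]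
  apply Subgroup.closure_mono
  rintro _ ⟨j, rfl⟩
  exact ⟨Fin.castLE hr j, by rw [hy]; exact dif_pos (show ((Fin.castLE hr j : Fin n) : ℕ) < grank G from j.isLt)⟩

/-- `H(n,G)` has the same exponent as `G`, and is abelian (resp. nilpotent,
solvable) iff `G` is. -/
theorem cover_properties (G : Type*) [Group G] [Finite G] (n : ℕ) (hr : grank G ≤ n) :
    Monoid.exponent (HomogeneousCover n G) = Monoid.exponent G ∧
    ((∀ a b : HomogeneousCover n G, a * b = b * a) ↔ ∀ a b : G, a * b = b * a) ∧
    (Group.IsNilpotent (HomogeneousCover n G) ↔ Group.IsNilpotent G) ∧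
    (IsSolvable (HomogeneousCover n G) ↔ IsSolvable G) := by
  obtain ⟨f₀, hf₀⟩ := exists_surj_freeGroup G n hr
  refine ⟨?_, ⟨?_, ?_⟩, ⟨?_, ?_⟩, ⟨?_, ?_⟩⟩
  · refine Nat.dvd_antisymm ?_ (MonoidHom.exponent_dvd (coverMap_surjective f₀ hf₀))
    apply Monoid.exponent_dvd_of_forall_pow_eq_one
    intro h
    apply eq_one_of_forall_coverMap
    intro f hf
    rw [map_pow]
    exact Monoid.pow_exponent_eq_one _
  · intro h a b
    obtain ⟨a, rfl⟩ := coverMap_surjective f₀ hf₀ a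
    obtain ⟨b, rfl⟩ := coverMap_surjective f₀ hf₀ b
    rw [← map_mul, ← map_mul, h a b]
  · intro h a b
    rw [← mul_inv_eq_one]
    apply eq_one_of_forall_coverMap
    intro f hf
    simp only [map_mul, map_inv, mul_inv_eq_one]
    exact h _ _
  · intro h
    exact nilpotent_of_surjective _ (coverMap_surjective f₀ hf₀)
  · intro h
    rw [nilpotent_iff_lowerCentralSeries] at h ⊢
    obtain ⟨m, hm⟩ := h
    refine ⟨m, eq_bot_iff.mpr fun h hh => ?_⟩
    rw [Subgroup.mem_bot]
    apply eq_one_of_forall_coverMap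
    intro f hf
    have : coverMap f hf h ∈ (⊤ : Subgroup G).lowerCentralSeries m :=
      lowerCentralSeries.map (coverMap f hf) m ⟨h, hh, rfl⟩
    rwa [hm, Subgroup.mem_bot] at this
  · intro h
    have : Group.IsSolvable (HomogeneousCover n G) := h
    exact solvable_of_surjective (coverMap_surjective f₀ hf₀)
  · intro h
    rw [IsSolvable, isSolvable_def] at h ⊢
    obtain ⟨m, hm⟩ := h
    refine ⟨m, eq_bot_iff.mpr fun h hh => ?_⟩
    rw [Subgroup.mem_bot]
    apply eq_one_of_forall_coverMap
    intro f hf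
    have : coverMap f hf h ∈ derivedSeries G m :=
      map_derivedSeries_le_derivedSeries (coverMap f hf) m ⟨h, hh, rfl⟩
    rwa [hm, Subgroup.mem_bot] at this
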